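/- With notation as in the s-relation lemma (same quotient space, same operators), the i-relation holds: ω_{(i+1)jknms} = −((5i + s + 1)/(5π))·ω_{ijknms} − (1/5)·ω_{ijknm(s+1)} for all i,j,k,n,m,s ≥ 0, and consequently δω_{ijknms} = 5i·ω_{ijknms} + 5π·ω_{(i+1)jknms}. -/

import Mathlib

/-! The twisted relative de Rham complex for the quintic family: we work in
`L = K[x₀,…,x₄,t][λ^{±1}]`, realized as Laurent polynomials in `λ` over the
multivariate polynomial ring `A = K[x₀,…,x₄,t]` (variables `0,…,4` are `x₀,…,x₄`
and variable `5` is `t`), modulo the span of the images of the operators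
`D_r = ∂_{x_r} + πt(5λx_r⁴ + x₀⋯x̂_r⋯x₄)` and `D_t = ∂_t + πφ_λ`,
where `φ_λ = λ(Σ x_r⁵) + x₀x₁x₂x₃x₄`. -/

noncomputable section

open MvPolynomial
local notation "Cλ" => LaurentPolynomial.C
local notation "Tλ" => LaurentPolynomial.T

variable {K : Type*}

/-- The coefficient ring `A = K[x₀,…,x₄,t]`. -/
abbrev A (K : Type*) [Field K] := MvPolynomial (Fin 6) K

/-- `L = A[λ^{±1}]`. -/
abbrev L (K : Type*) [Field K] := LaurentPolynomial (A K)

variable [Field K] [CharZero K]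

/-- `t`. -/
def tA : A K := X 5
/-- `x = x₀x₁x₂x₃x₄`. -/
def xprod : A K := ∏ r : Fin 5, X r.castSucc
/-- `Σ_r x_r⁵`. -/
def sumx5 : A K := ∑ r : Fin 5, X r.castSucc ^ 5

/-- Partial derivative `∂` (in one of the variables `x₀,…,x₄,t`) extended
coefficientwise to `L`. -/
def pdL (r : Fin 6) (f : L K) : L K :=
  AddMonoidAlgebra.ofCoeff (Finsupp.mapRange (⇑(pderiv r)) (map_zero _) f.coeff)

/-- `λ ∂_λ` on `L`. -/
def lamDlam (f : L K) : L K :=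
  AddMonoidAlgebra.ofCoeff (f.coeff.sum fun n a => Finsupp.single n (n • a))

/-- The operator `D_r = ∂_{x_r} + πt(5λx_r⁴ + x₀⋯x̂_r⋯x₄)`. -/
def Dx (π : K) (r : Fin 5) (f : L K) : L K :=
  pdL r.castSucc f +
    Cλ (MvPolynomial.C π * tA) *
      ((5 : L K) * Tλ 1 * Cλ (X r.castSucc ^ 4) +
        Cλ (∏ j ∈ Finset.univ.erase r, X j.castSucc)) * f

/-- The operator `D_t = ∂_t + πφ_λ` with `φ_λ = λ(Σ x_r⁵) + x₀⋯x₄`. -/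
def Dt (π : K) (f : L K) : L K :=
  pdL 5 f + Cλ (MvPolynomial.C π) * (Tλ 1 * Cλ sumx5 + Cλ xprod) * f

/-- `δ = λ∂_λ + πtλ(Σ x_r⁵)`. -/
def δop (π : K) (f : L K) : L K :=
  lamDlam f + Cλ (MvPolynomial.C π * tA * sumx5) * Tλ 1 * f

/-- The subspace spanned by the images of `D₀, …, D₄` and `D_t`. -/
def N (π : K) : Submodule K (L K) :=
  Submodule.span K ((⋃ r : Fin 5, Set.range (Dx π r)) ∪ Set.range (Dt π))

/-- `ω_{ijknms} = (λtx₀⁵)^i (λtx₁⁵)^j (λtx₂⁵)^k (λtx₃⁵)^n (λtx₄⁵)^m (tx)^s`. -/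
def ωc (i j k n m s : ℕ) : L K :=
  (Tλ 1 * Cλ (tA * X (0 : Fin 5).castSucc ^ 5)) ^ i *
    (Tλ 1 * Cλ (tA * X (1 : Fin 5).castSucc ^ 5)) ^ j *
    (Tλ 1 * Cλ (tA * X (2 : Fin 5).castSucc ^ 5)) ^ k *
    (Tλ 1 * Cλ (tA * X (3 : Fin 5).castSucc ^ 5)) ^ n *
    (Tλ 1 * Cλ (tA * X (4 : Fin 5).castSucc ^ 5)) ^ m *
    Cλ (tA * xprod) ^ s

/-! `D₀(x₀ω) = (5i + s + 1)ω + π ω_{ijknm(s+1)} + 5π ω_{(i+1)jknms}`: the derivative term comes from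
`ω` being homogeneous of degree `5i + s` in `x₀`, the other two from multiplying `x₀ω` by
`πt(x₁x₂x₃x₄ + 5λx₀⁴)`. Likewise `D_t(tω) = δω + (s + 1)ω + π ω_{ijknm(s+1)}` (the `s`-relation),
since `ω` has degree `i + j + k + n + m + s` in `t` and `i + j + k + n + m` in `λ`. The `i`-relation
is the first identity divided by `5π`; the formula for `δω` is the difference of the two. -/

namespace MvPolynomial

variable {σ R : Type*} [CommSemiring R] [Fintype σ] [DecidableEq σ]

theorem X_mul_pderiv_of_isWeightedHomogeneous_single {φ : MvPolynomial σ R} {r : σ} {n : ℕ}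
    (h : φ.IsWeightedHomogeneous (Pi.single r 1) n) : X r * pderiv r φ = n • φ := by
  simpa [Pi.single_apply] using h.sum_weight_X_mul_pderiv

end MvPolynomial

section

omit [CharZero K]

section LaurentMonomials

variable (π : K) (a : A K) (p : ℤ)

theorem pdL_C_mul_T (r : Fin 6) : pdL r (Cλ a * Tλ p) = Cλ (pderiv r a) * Tλ p := by
  rw [← LaurentPolynomial.single_eq_C_mul_T, ← LaurentPolynomial.single_eq_C_mul_T,
    pdL, AddMonoidAlgebra.coeff_single, Finsupp.mapRange_single, AddMonoidAlgebra.ofCoeff_single]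

theorem lamDlam_C_mul_T : lamDlam (Cλ a * Tλ p : L K) = Cλ (p • a) * Tλ p := by
  rw [← LaurentPolynomial.single_eq_C_mul_T, ← LaurentPolynomial.single_eq_C_mul_T,
    lamDlam, AddMonoidAlgebra.coeff_single, Finsupp.sum_single_index (by simp)]
  exact AddMonoidAlgebra.ofCoeff_single _ _

theorem smul_eq_C_C_mul (c : K) (f : L K) : c • f = Cλ (MvPolynomial.C c) * f :=
  Algebra.smul_def c f

theorem Dx_C_mul_T (r : Fin 5) :
    Dx π r (Cλ a * Tλ p) =
      Cλ (pderiv r.castSucc a +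
          MvPolynomial.C π * tA * (∏ j ∈ Finset.univ.erase r, X j.castSucc) * a) * Tλ p +
        Cλ (MvPolynomial.C π * tA * (5 * X r.castSucc ^ 4) * a) * Tλ (p + 1) := by
  rw [Dx, pdL_C_mul_T, LaurentPolynomial.T_add]
  simp only [map_mul, map_add, map_ofNat]
  ring

theorem Dt_C_mul_T :
    Dt π (Cλ a * Tλ p) =
      Cλ (pderiv 5 a + MvPolynomial.C π * xprod * a) * Tλ p +
        Cλ (MvPolynomial.C π * sumx5 * a) * Tλ (p + 1) := by
  rw [Dt, pdL_C_mul_T, LaurentPolynomial.T_add]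
  simp only [map_mul, map_add]
  ring

theorem δop_C_mul_T :
    δop π (Cλ a * Tλ p) =
      Cλ (p • a) * Tλ p + Cλ (MvPolynomial.C π * tA * sumx5 * a) * Tλ (p + 1) := by
  rw [δop, lamDlam_C_mul_T, LaurentPolynomial.T_add]
  simp only [map_mul]
  ring

end LaurentMonomials

section Omega

variable (i j k n m s : ℕ)

def ωCoeff : A K :=
  (tA * X (0 : Fin 5).castSucc ^ 5) ^ i * (tA * X (1 : Fin 5).castSucc ^ 5) ^ j *
    (tA * X (2 : Fin 5).castSucc ^ 5) ^ k * (tA * X (3 : Fin 5).castSucc ^ 5) ^ n *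
    (tA * X (4 : Fin 5).castSucc ^ 5) ^ m * (tA * xprod) ^ s

theorem ωc_eq_C_mul_T :
    (ωc i j k n m s : L K) = Cλ (ωCoeff i j k n m s) * Tλ ((i + j + k + n + m : ℕ) : ℤ) := by
  simp only [ωc, ωCoeff, mul_pow, ← map_pow, LaurentPolynomial.T_pow, map_mul]
  push_cast
  simp only [mul_one, LaurentPolynomial.T_add]
  ring

theorem isWeightedHomogeneous_ωCoeff (w : Fin 6 → ℕ) :
    (ωCoeff i j k n m s : A K).IsWeightedHomogeneous w
      (i * (w 5 + 5 * w 0) + j * (w 5 + 5 * w 1) + k * (w 5 + 5 * w 2) + n * (w 5 + 5 * w 3) +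
        m * (w 5 + 5 * w 4) + s * (w 5 + ∑ r : Fin 5, w r.castSucc)) := by
  have hX (r : Fin 6) : (X r : A K).IsWeightedHomogeneous w (w r) := isWeightedHomogeneous_X K w r
  have htX (r : Fin 5) : (tA * X r.castSucc ^ 5 : A K).IsWeightedHomogeneous w
      (w 5 + 5 * w r.castSucc) := by
    have h := (hX 5).mul ((hX r.castSucc).pow 5)
    rw [smul_eq_mul] at h
    exact h
  have htx : (tA * xprod : A K).IsWeightedHomogeneous w (w 5 + ∑ r : Fin 5, w r.castSucc) :=
    (hX 5).mul (IsWeightedHomogeneous.prod _ _ _ fun r _ => hX r.castSucc)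
  have h := ((((((htX 0).pow i).mul ((htX 1).pow j)).mul ((htX 2).pow k)).mul
    ((htX 3).pow n)).mul ((htX 4).pow m)).mul (htx.pow s)
  simp only [smul_eq_mul] at h
  exact h

theorem X_zero_mul_pderiv_ωCoeff :
    X 0 * pderiv 0 (ωCoeff i j k n m s : A K) = (5 * i + s) • ωCoeff i j k n m s := by
  refine X_mul_pderiv_of_isWeightedHomogeneous_single ?_
  simpa [Fin.sum_univ_five, mul_comm] using
    isWeightedHomogeneous_ωCoeff (K := K) i j k n m s (Pi.single 0 1)

theorem tA_mul_pderiv_ωCoeff :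
    tA * pderiv 5 (ωCoeff i j k n m s : A K) = (i + j + k + n + m + s) • ωCoeff i j k n m s := by
  refine X_mul_pderiv_of_isWeightedHomogeneous_single ?_
  simpa [Fin.sum_univ_five] using
    isWeightedHomogeneous_ωCoeff (K := K) i j k n m s (Pi.single 5 1)

theorem ωc_succ_i :
    (ωc (i + 1) j k n m s : L K) = Tλ 1 * Cλ (tA * X 0 ^ 5) * ωc i j k n m s := by
  simp only [ωc, pow_succ, Fin.castSucc_zero]
  ring

theorem ωc_succ_s :
    (ωc i j k n m (s + 1) : L K) = Cλ (tA * xprod) * ωc i j k n m s := by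
  simp only [ωc, pow_succ]
  ring

theorem pderiv_X_zero_mul_ωCoeff :
    pderiv 0 (X 0 * ωCoeff i j k n m s : A K) = (5 * i + s + 1) • ωCoeff i j k n m s := by
  rw [pderiv_mul, X_zero_mul_pderiv_ωCoeff, pderiv_X_self, one_mul]
  exact (succ_nsmul' _ _).symm

theorem pderiv_tA_mul_ωCoeff :
    pderiv 5 (tA * ωCoeff i j k n m s : A K) =
      (i + j + k + n + m + s + 1) • ωCoeff i j k n m s := by
  rw [pderiv_mul, tA_mul_pderiv_ωCoeff, tA, pderiv_X_self, one_mul]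
  exact (succ_nsmul' _ _).symm

theorem xprod_eq_X_mul_prod_erase (r : Fin 5) :
    (xprod : A K) = X r.castSucc * ∏ j ∈ Finset.univ.erase r, X j.castSucc :=
  (Finset.mul_prod_erase _ _ (Finset.mem_univ r)).symm

end Omega

section Relations

variable (π : K)

theorem Dx_mem_N (r : Fin 5) (f : L K) : Dx π r f ∈ N π :=
  Submodule.subset_span (Or.inl (Set.mem_iUnion.2 ⟨r, f, rfl⟩))

theorem Dt_mem_N (f : L K) : Dt π f ∈ N π :=
  Submodule.subset_span (Or.inr ⟨f, rfl⟩)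

variable (i j k n m s : ℕ)

theorem Dx_zero_X_mul_ωc :
    Dx π 0 (Cλ (X 0) * ωc i j k n m s) = (5 * (i : K) + s + 1) • ωc i j k n m s +
      π • ωc i j k n m (s + 1) + (5 * π) • ωc (i + 1) j k n m s := by
  rw [ωc_succ_i, ωc_succ_s, ωc_eq_C_mul_T, ← mul_assoc, ← map_mul, Dx_C_mul_T,
    Fin.castSucc_zero, pderiv_X_zero_mul_ωCoeff, xprod_eq_X_mul_prod_erase 0]
  simp only [smul_eq_C_C_mul, LaurentPolynomial.T_add, map_add, map_mul, map_pow, map_one,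
    nsmul_eq_mul, map_natCast, map_ofNat, Fin.castSucc_zero]
  push_cast
  ring

theorem Dt_tA_mul_ωc :
    Dt π (Cλ tA * ωc i j k n m s) = δop π (ωc i j k n m s) + ((s : K) + 1) • ωc i j k n m s +
      π • ωc i j k n m (s + 1) := by
  rw [ωc_succ_s, ωc_eq_C_mul_T, ← mul_assoc, ← map_mul, Dt_C_mul_T, δop_C_mul_T,
    pderiv_tA_mul_ωCoeff]
  simp only [smul_eq_C_C_mul, LaurentPolynomial.T_add, map_add, map_mul, nsmul_eq_mul,
    zsmul_eq_mul, map_intCast, map_natCast, map_one]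
  push_cast
  ring

end Relations

end

/-- The `i`-relation: modulo the images of the operators `D_r` and `D_t`,
`ω_{(i+1)jknms} = -((5i+s+1)/(5π))·ω_{ijknms} - (1/5)·ω_{ijknm(s+1)}`, and consequently
`δω_{ijknms} = 5i·ω_{ijknms} + 5π·ω_{(i+1)jknms}`. -/
theorem stmt18 (π : K) (hπ : π ≠ 0) (i j k n m s : ℕ) :
    (ωc (i + 1) j k n m s + ((5 * (i : K) + (s : K) + 1) / (5 * π)) • (ωc i j k n m s : L K) +
        ((5 : K)⁻¹) • ωc i j k n m (s + 1) ∈ N π) ∧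
    (δop π (ωc i j k n m s) - (5 * (i : K)) • (ωc i j k n m s : L K) -
        (5 * π) • ωc (i + 1) j k n m s ∈ N π) := by
  have hDx := Dx_zero_X_mul_ωc π i j k n m s
  have hDt := Dt_tA_mul_ωc π i j k n m s
  constructor
  · have hrel : ωc (i + 1) j k n m s + ((5 * (i : K) + s + 1) / (5 * π)) • ωc i j k n m s +
        (5 : K)⁻¹ • ωc i j k n m (s + 1) = (5 * π)⁻¹ • Dx π 0 (Cλ (X 0) * ωc i j k n m s) := by
      rw [hDx]
      match_scalars <;> field_simp
    rw [hrel]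
    exact (N π).smul_mem _ (Dx_mem_N π 0 _)
  · have hrel : δop π (ωc i j k n m s) - (5 * (i : K)) • ωc i j k n m s -
        (5 * π) • ωc (i + 1) j k n m s =
        Dt π (Cλ tA * ωc i j k n m s) - Dx π 0 (Cλ (X 0) * ωc i j k n m s) := by
      rw [hDx, hDt]
      module
    rw [hrel]
    exact (N π).sub_mem (Dt_mem_N π _) (Dx_mem_N π 0 _)

end
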